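/- arXiv:1512.04862 — 4 statements merged into one kernel-verified Lean document; each statement's English description precedes it below -/
import Mathlib

section
/- The first Symanzik polynomial never vanishes: ψ(H,Y) is a nonzero element of the polynomial ring K[Y_e : e ∈ E]; equivalently, the Gram matrix M = (⟨γ_i,γ_j⟩_Y) is invertible over the field of fractions K(Y_e : e ∈ E). -/
open MvPolynomial AddMonoidAlgebra

/-- Anisotropy of the generic diagonal form `∑ X_e x_e²` over `K[Y]`. -/
lemma symanzik_aniso {K : Type} [Field K] {E : Type} [Fintype E] [LinearOrder E]
    (p : E → MvPolynomial E K)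
    (hsum : ∑ e : E, MvPolynomial.X e * (p e) ^ 2 = 0) (e : E) : p e = 0 := by
  classical
  by_contra hne
  set D : (E →₀ ℕ) → Lex (E →₀ ℕ) := ⇑(toLex (α := E →₀ ℕ)) with hD
  have hDinj : Function.Injective D := toLex.injective
  have hadd : ∀ a b : E →₀ ℕ, D (a + b) = D a + D b := fun a b => rfl
  set s : Finset E := Finset.univ.filter (fun e => p e ≠ 0) with hs
  have hmem : e ∈ s := by simp [hs, hne]
  have hf : ∀ e' ∈ s, MvPolynomial.X (R := K) e' * (p e') ^ 2 ≠ 0 := by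
    intro e' he'
    have hp : p e' ≠ 0 := by simpa [hs] using he'
    exact mul_ne_zero (MvPolynomial.X_ne_zero e') (pow_ne_zero 2 hp)
  have hsum' : ∑ e' ∈ s, MvPolynomial.X (R := K) e' * (p e') ^ 2 = 0 := by
    refine Eq.trans (Finset.sum_subset (Finset.filter_subset _ _) ?_) hsum
    intro x _ hx
    have : p x = 0 := by
      by_contra hc
      exact hx (by simp [hs, hc])
    simp [this]
  -- compute supDegree of each term
  have hdeg : ∀ e' : E, p e' ≠ 0 →
      AddMonoidAlgebra.supDegree D (MvPolynomial.X (R := K) e' * (p e') ^ 2)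
        = D (Finsupp.single e' 1) + ((p e' * p e').supDegree D) := by
    intro e' hp
    have hx : (MvPolynomial.X (R := K) e') ≠ 0 := MvPolynomial.X_ne_zero e'
    have hq : p e' * p e' ≠ 0 := mul_ne_zero hp hp
    have hlc : AddMonoidAlgebra.leadingCoeff D (MvPolynomial.X (R := K) e') *
        AddMonoidAlgebra.leadingCoeff D (p e' * p e') ≠ 0 :=
      mul_ne_zero ((AddMonoidAlgebra.leadingCoeff_ne_zero hDinj).mpr hx)
        ((AddMonoidAlgebra.leadingCoeff_ne_zero hDinj).mpr hq)
    rw [sq]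
    rw [AddMonoidAlgebra.supDegree_mul hDinj hadd hlc hx hq]
    congr 1
    have : (MvPolynomial.X (R := K) e') =
        AddMonoidAlgebra.single (Finsupp.single e' 1) (1 : K) := rfl
    rw [this, AddMonoidAlgebra.supDegree_single_ne_zero _ one_ne_zero]
  have hinj : (↑s : Set E).InjOn (AddMonoidAlgebra.supDegree D ∘
      fun e' => MvPolynomial.X (R := K) e' * (p e') ^ 2) := by
    intro a ha b hb hab
    by_contra hne'
    have hpa : p a ≠ 0 := by simpa [hs] using ha
    have hpb : p b ≠ 0 := by simpa [hs] using hb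
    simp only [Function.comp] at hab
    rw [hdeg a hpa, hdeg b hpb] at hab
    have hqa : p a * p a ≠ 0 := mul_ne_zero hpa hpa
    have hqb : p b * p b ≠ 0 := mul_ne_zero hpb hpb
    obtain ⟨ma, -, hma⟩ := AddMonoidAlgebra.exists_supDegree_mem_support D hpa
    obtain ⟨mb, -, hmb⟩ := AddMonoidAlgebra.exists_supDegree_mem_support D hpb
    have hlca : AddMonoidAlgebra.leadingCoeff D (p a) * AddMonoidAlgebra.leadingCoeff D (p a) ≠ 0 :=
      mul_ne_zero ((AddMonoidAlgebra.leadingCoeff_ne_zero hDinj).mpr hpa)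
        ((AddMonoidAlgebra.leadingCoeff_ne_zero hDinj).mpr hpa)
    have hlcb : AddMonoidAlgebra.leadingCoeff D (p b) * AddMonoidAlgebra.leadingCoeff D (p b) ≠ 0 :=
      mul_ne_zero ((AddMonoidAlgebra.leadingCoeff_ne_zero hDinj).mpr hpb)
        ((AddMonoidAlgebra.leadingCoeff_ne_zero hDinj).mpr hpb)
    rw [AddMonoidAlgebra.supDegree_mul hDinj hadd hlca hpa hpa, hma,
      AddMonoidAlgebra.supDegree_mul hDinj hadd hlcb hpb hpb, hmb] at hab
    have hab' : Finsupp.single a 1 + (ma + ma) = Finsupp.single b 1 + (mb + mb) := by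
      apply toLex.injective
      simpa [hD, map_add] using hab
    have := congrArg (fun f : E →₀ ℕ => f a) hab'
    simp [Finsupp.single_apply, Ne.symm hne'] at this
    omega
  have := AddMonoidAlgebra.sum_ne_zero_of_injOn_supDegree' (D := D)
    ⟨e, hmem, hf e hmem⟩ hinj
  exact this hsum'


/-- The first Symanzik polynomial never vanishes: for a basis `γ₁,…,γ_h` of `H`, the
determinant of the `h×h` Gram matrix `M = (⟨γ_i,γ_j⟩_Y)` with respect to
`⟨x,y⟩_Y = Σ_e Y_e x_e y_e` is a nonzero element of `K[Y_e : e ∈ E]` (equivalently,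
`M` is invertible over the fraction field `K(Y_e : e ∈ E)`). -/
theorem first_symanzik_ne_zero
    {K : Type} [Field K] {E : Type} [Fintype E]
    (H : Submodule K (E → K)) (h : ℕ)
    (γ : Fin h → (E → K))
    (hli : LinearIndependent K γ)
    (hsp : Submodule.span K (Set.range γ) = H) :
    Matrix.det (Matrix.of fun i j : Fin h =>
        ∑ e : E, MvPolynomial.X e * MvPolynomial.C (γ i e * γ j e)) ≠ 0 := by
  classical
  letI : LinearOrder E := LinearOrder.lift' (Fintype.equivFin E) (Equiv.injective _)
  intro hdet
  obtain ⟨v, hv, hmul⟩ := Matrix.exists_mulVec_eq_zero_iff.mpr hdet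
  set p : E → MvPolynomial E K := fun e => ∑ i, v i * MvPolynomial.C (γ i e) with hp
  have hkey : ∑ e : E, MvPolynomial.X e * (p e) ^ 2 = 0 := by
    have h1 : ∑ i, v i * Matrix.mulVec (Matrix.of (fun i j : Fin h =>
        ∑ e : E, MvPolynomial.X e * MvPolynomial.C (γ i e * γ j e))) v i = 0 := by
      rw [hmul]; simp
    rw [← h1]
    simp only [Matrix.mulVec, dotProduct, Matrix.of_apply, sq, hp, map_mul,
      Finset.mul_sum, Finset.sum_mul]
    rw [Finset.sum_comm]
    refine Finset.sum_congr rfl fun i _ => ?_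
    rw [Finset.sum_comm]
    refine Finset.sum_congr rfl fun j _ => ?_
    refine Finset.sum_congr rfl fun e _ => ?_
    ring
  have hpe : ∀ e, p e = 0 := symanzik_aniso p hkey
  refine hv (funext fun i => ?_)
  apply MvPolynomial.ext
  intro m
  set c : Fin h → K := fun i => MvPolynomial.coeff m (v i) with hc
  have hce : ∀ e, ∑ i, c i * γ i e = 0 := by
    intro e
    have := congrArg (MvPolynomial.coeff m) (hpe e)
    have hterm : ∀ (q : MvPolynomial E K) (a : K),
        MvPolynomial.coeff m (q * MvPolynomial.C a) = MvPolynomial.coeff m q * a := by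
      intro q a; rw [mul_comm, MvPolynomial.coeff_C_mul, mul_comm]
    simpa [hp, hc, MvPolynomial.coeff_sum, hterm] using this
  have hz : ∀ i, c i = 0 := by
    refine Fintype.linearIndependent_iff.mp hli c ?_
    funext e
    simpa [Finset.sum_apply, smul_eq_mul] using hce e
  simpa [hc] using hz i
end

section
/- (Kirchhoff's matrix-tree theorem for the first Symanzik polynomial) If G is a finite connected graph, then ψ_G(Y) = Σ_{T} Π_{e ∉ T} Y_e, where T runs over all spanning trees of G. -/
/-!
Let `Γ` be the `E × h` integer matrix whose columns are the `γ i`, so that the matrix of the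
statement is `Γᵀ · diag(Y) · Γ`. By Cauchy–Binet its determinant is `∑_S (det Γ_S)² ∏_{e ∈ S} Y_e`
over the `h`-element edge sets `S`, where `Γ_S` keeps the rows of `Γ` indexed by `S`; since
`h + |V| = |E| + 1`, the complement `T = Sᶜ` has `|V| - 1` edges.

If `T` connects all vertices, every vector on `V` with coordinate sum zero is the boundary of a
chain supported on `T`. Hence every vector on `S` extends to a cycle, i.e. `Γ_S` is surjective
over `ℤ`, and `det Γ_S = ±1`. Otherwise some vertex set `C` is closed under the edges of `T` and
separates two vertices `u ∈ C`, `v ∉ C`. Boundaries of chains on `T` sum to zero over `C` and over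
`Cᶜ`, so they are determined by their values off `{u, v}`; as `|T| > |V| - 2`, some nonzero cycle
is supported on `T`, it lies in the kernel of `Γ_S`, and `det Γ_S = 0`.
-/

open Finset Function Equiv Matrix

namespace Finset

variable {E n : Type*} [Fintype n]

noncomputable def equivOfCard (S : {S : Finset E // S.card = Fintype.card n}) : n ≃ S.1 :=
  Fintype.equivOfCardEq (by rw [Fintype.card_coe, S.2])

noncomputable def enumOfCard (S : {S : Finset E // S.card = Fintype.card n}) (i : n) : E :=
  equivOfCard S i

theorem enumOfCard_injective (S : {S : Finset E // S.card = Fintype.card n}) :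
    Injective (enumOfCard S) :=
  Subtype.val_injective.comp (Equiv.injective _)

theorem enumOfCard_mem (S : {S : Finset E // S.card = Fintype.card n}) (i : n) :
    enumOfCard S i ∈ S.1 :=
  (equivOfCard S i).2

theorem image_enumOfCard_comp [DecidableEq E] (S : {S : Finset E // S.card = Fintype.card n})
    (σ : Perm n) : univ.image (enumOfCard S ∘ σ) = S.1 := by
  ext e
  refine ⟨fun he => ?_, fun he =>
    mem_image.2 ⟨σ.symm ((equivOfCard S).symm ⟨e, he⟩), mem_univ _, ?_⟩⟩
  · obtain ⟨i, -, rfl⟩ := mem_image.1 he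
    exact enumOfCard_mem S _
  · simp [enumOfCard]

/-- An injective `r : n → E` is uniquely `enumOfCard S ∘ σ`, with `S` its image and `σ` a
permutation. -/
theorem sum_eq_sum_subsets_sum_perm [DecidableEq n] [Fintype E] [DecidableEq E] {M : Type*}
    [AddCommMonoid M] (F : (n → E) → M) (hF : ∀ r, ¬ Injective r → F r = 0) :
    ∑ r, F r = ∑ S : {S : Finset E // S.card = Fintype.card n}, ∑ σ : Perm n,
      F (enumOfCard S ∘ σ) := by
  rw [← Fintype.sum_prod_type']
  symm
  refine sum_of_injOn (fun p => enumOfCard p.1 ∘ p.2) ?_ (by simp) ?_ (fun _ _ => rfl)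
  · rintro ⟨S, σ⟩ - ⟨S', σ'⟩ - hr
    obtain rfl : S = S' := Subtype.ext <| by
      rw [← image_enumOfCard_comp S σ, ← image_enumOfCard_comp S' σ']
      exact congrArg (univ.image ·) hr
    simp only [Prod.mk.injEq, true_and]
    exact Equiv.ext fun i => enumOfCard_injective S (congrFun hr i)
  · intro r _ hr
    refine hF r fun hinj => hr ?_
    let S : {S : Finset E // S.card = Fintype.card n} :=
      ⟨univ.image r, by rw [card_image_of_injective _ hinj, card_univ]⟩
    have hmem : ∀ i, r i ∈ S.1 := fun i => mem_image_of_mem r (mem_univ i)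
    let σ : Perm n := Equiv.ofBijective (fun i => (equivOfCard S).symm ⟨r i, hmem i⟩)
      (Finite.injective_iff_bijective.1 fun i j hij => hinj (by simpa using hij))
    exact ⟨(S, σ), by simp, funext fun i => by simp [σ, enumOfCard]⟩

theorem sum_subtype_card_eq_sum_filter_compl [Fintype E] [DecidableEq E] {M : Type*}
    [AddCommMonoid M] (k : ℕ) (f : Finset E → M) :
    ∑ S : {S : Finset E // S.card = k}, f S.1 =
      ∑ T ∈ univ.filter (fun T => Tᶜ.card = k), f Tᶜ := by
  rw [← sum_subtype (univ.filter (·.card = k)) (by simp) f]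
  exact sum_nbij' compl compl (by simp) (by simp) (by simp) (by simp) (by simp)

end Finset

namespace Matrix

variable {R n E : Type*} [CommRing R] [Fintype n] [DecidableEq n] [Fintype E]

theorem det_mul_eq_sum_det_submatrix_mul_prod (A : Matrix n E R) (B : Matrix E n R) :
    (A * B).det = ∑ r : n → E, (A.submatrix id r).det * ∏ i, B (r i) i := by
  simp only [det_apply, mul_apply, Fintype.prod_sum, prod_mul_distrib, submatrix_apply, id,
    smul_sum, sum_mul, smul_mul_assoc]
  exact sum_comm

theorem det_mul_eq_sum_subsets [DecidableEq E] (A : Matrix n E R) (B : Matrix E n R) :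
    (A * B).det = ∑ S : {S : Finset E // S.card = Fintype.card n},
      (A.submatrix id (enumOfCard S)).det * (B.submatrix (enumOfCard S) id).det := by
  rw [det_mul_eq_sum_det_submatrix_mul_prod, sum_eq_sum_subsets_sum_perm]
  · refine sum_congr rfl fun S _ => ?_
    rw [det_apply (B.submatrix _ _), mul_comm, sum_mul]
    refine sum_congr rfl fun σ _ => ?_
    rw [show A.submatrix id (enumOfCard S ∘ σ) = (A.submatrix id (enumOfCard S)).submatrix id σ
      from rfl, det_permute', Units.smul_def, zsmul_eq_mul]
    simp only [submatrix_apply, id, Function.comp_apply]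
    ring
  · intro r hr
    obtain ⟨i, j, hij, hne⟩ := Function.not_injective_iff.1 hr
    rw [det_zero_of_column_eq hne (fun k => by simp [hij]), zero_mul]

theorem det_transpose_mul_diagonal_mul [DecidableEq E] (Γ : Matrix E n R) (w : E → R) :
    (Γᵀ * diagonal w * Γ).det = ∑ S : {S : Finset E // S.card = Fintype.card n},
      (∏ e ∈ S.1, w e) * (Γ.submatrix (enumOfCard S) id).det ^ 2 := by
  rw [det_mul_eq_sum_subsets]
  refine sum_congr rfl fun S _ => ?_
  have hprod : ∏ i, w (enumOfCard S i) = ∏ e ∈ S.1, w e := by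
    rw [← prod_coe_sort S.1]
    exact (equivOfCard S).prod_comp (fun e => w e)
  have hsub : (Γᵀ * diagonal w).submatrix id (enumOfCard S) =
      (Γ.submatrix (enumOfCard S) id)ᵀ * diagonal (w ∘ enumOfCard S) := by
    ext i j
    simp
  rw [hsub, det_mul, det_transpose, det_diagonal]
  simp only [Function.comp_apply, hprod]
  ring

end Matrix

section Connectivity

variable {V E : Type*} (head tail : E → V)

def Connects (T : Finset E) : Prop :=
  ∀ u v : V, Relation.EqvGen (fun a b => ∃ e ∈ T, head e = a ∧ tail e = b) u v

variable {head tail}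

theorem exists_separating_of_not_connects [Fintype V] {T : Finset E}
    (hT : ¬ Connects head tail T) :
    ∃ C : Finset V, ∃ u ∈ C, ∃ v ∉ C, ∀ e ∈ T, head e ∈ C ↔ tail e ∈ C := by
  classical
  obtain ⟨u, v, huv⟩ :
      ∃ u v, ¬ Relation.EqvGen (fun a b => ∃ e ∈ T, head e = a ∧ tail e = b) u v := by
    simpa [Connects] using hT
  refine ⟨univ.filter (Relation.EqvGen _ u), u, by simp [Relation.EqvGen.refl], v,
    by simpa using huv, fun e he => ?_⟩
  have hrel : Relation.EqvGen (fun a b => ∃ e ∈ T, head e = a ∧ tail e = b) (head e) (tail e) :=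
    .rel _ _ ⟨e, he, rfl, rfl⟩
  simp only [mem_filter, mem_univ, true_and]
  exact ⟨fun h => h.trans _ _ _ hrel, fun h => h.trans _ _ _ hrel.symm⟩

end Connectivity

section Incidence

variable {V E : Type*} [Fintype E] [DecidableEq V] (R : Type*) [CommRing R] (head tail : E → V)

/-- `x ᵥ* incidenceMatrix R head tail` is the boundary `∂x` of the chain `x : E → R`. -/
def incidenceMatrix : Matrix E V R :=
  of fun e v => (if head e = v then 1 else 0) - (if tail e = v then 1 else 0)

variable {R head tail}

theorem sum_vecMul_incidenceMatrix (x : E → R) (C : Finset V) :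
    ∑ v ∈ C, (x ᵥ* incidenceMatrix R head tail) v =
      ∑ e, x e * ((if head e ∈ C then 1 else 0) - (if tail e ∈ C then 1 else 0)) := by
  simp only [vecMul, dotProduct, incidenceMatrix, of_apply]
  rw [sum_comm]
  refine sum_congr rfl fun e _ => ?_
  simp [← mul_sum, sum_sub_distrib]

theorem sum_vecMul_incidenceMatrix_eq_zero_of_forall_mem_iff {T : Finset E} {C : Finset V}
    (hC : ∀ e ∈ T, head e ∈ C ↔ tail e ∈ C) {x : E → R} (hx : ∀ e ∉ T, x e = 0) :
    ∑ v ∈ C, (x ᵥ* incidenceMatrix R head tail) v = 0 := by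
  rw [sum_vecMul_incidenceMatrix]
  refine sum_eq_zero fun e _ => ?_
  by_cases he : e ∈ T
  · simp [hC e he]
  · simp [hx e he]

theorem sum_vecMul_incidenceMatrix_eq_zero [Fintype V] (x : E → R) :
    ∑ v, (x ᵥ* incidenceMatrix R head tail) v = 0 :=
  sum_vecMul_incidenceMatrix_eq_zero_of_forall_mem_iff (T := univ) (by simp) (by simp)

theorem exists_vecMul_incidenceMatrix_eq_single_sub_single {T : Finset E} {u v : V}
    (huv : Relation.EqvGen (fun a b => ∃ e ∈ T, head e = a ∧ tail e = b) u v) :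
    ∃ x : E → R, (∀ e ∉ T, x e = 0) ∧
      x ᵥ* incidenceMatrix R head tail = Pi.single u 1 - Pi.single v 1 := by
  classical
  induction huv with
  | rel a b hab =>
    obtain ⟨e, heT, rfl, rfl⟩ := hab
    refine ⟨Pi.single e 1, fun e' he' => Pi.single_eq_of_ne (by rintro rfl; exact he' heT) _, ?_⟩
    ext v
    simp [incidenceMatrix, Pi.single_apply, eq_comm]
  | refl a => exact ⟨0, by simp, by simp⟩
  | symm a b _ ih =>
    obtain ⟨x, hx, hxI⟩ := ih
    exact ⟨-x, by simp +contextual [hx], by simp [neg_vecMul, hxI]⟩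
  | trans a b c _ _ ihab ihbc =>
    obtain ⟨x, hx, hxI⟩ := ihab
    obtain ⟨y, hy, hyI⟩ := ihbc
    exact ⟨x + y, by simp +contextual [hx, hy], by simp [add_vecMul, hxI, hyI]⟩

theorem exists_vecMul_incidenceMatrix_eq [Fintype V] {T : Finset E}
    (hT : Connects head tail T) (z : V → R) (hz : ∑ v, z v = 0) :
    ∃ x : E → R, (∀ e ∉ T, x e = 0) ∧ x ᵥ* incidenceMatrix R head tail = z := by
  cases isEmpty_or_nonempty V with
  | inl _ => exact ⟨0, by simp, funext isEmptyElim⟩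
  | inr hV =>
    obtain ⟨v₀⟩ := hV
    choose x hx hxI using
      fun w => exists_vecMul_incidenceMatrix_eq_single_sub_single (R := R) (hT w v₀)
    refine ⟨∑ w, z w • x w, fun e he => by simp [hx _ e he], ?_⟩
    rw [sum_vecMul]
    simp only [smul_vecMul, hxI, smul_sub, sum_sub_distrib, ← sum_smul, hz, zero_smul, sub_zero]
    ext v
    simp [Pi.single_apply]

theorem vecMul_incidenceMatrix_eq_zero_of_eq_zero_off_pair [Fintype V] {T : Finset E}
    {C : Finset V} (hC : ∀ e ∈ T, head e ∈ C ↔ tail e ∈ C) {x : E → R} (hx : ∀ e ∉ T, x e = 0)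
    {u v : V} (hu : u ∈ C) (hv : v ∉ C)
    (hz : ∀ w, w ≠ u → w ≠ v → (x ᵥ* incidenceMatrix R head tail) w = 0) :
    x ᵥ* incidenceMatrix R head tail = 0 := by
  have hCc : ∀ e ∈ T, head e ∈ Cᶜ ↔ tail e ∈ Cᶜ := fun e he => by simp [hC e he]
  ext w
  by_cases hwu : w = u
  · subst hwu
    rw [Pi.zero_apply, ← sum_vecMul_incidenceMatrix_eq_zero_of_forall_mem_iff hC hx,
      sum_eq_single_of_mem w hu fun w' hw' hw'u => hz w' hw'u (by rintro rfl; exact hv hw')]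
  by_cases hwv : w = v
  · subst hwv
    rw [Pi.zero_apply, ← sum_vecMul_incidenceMatrix_eq_zero_of_forall_mem_iff hCc hx,
      sum_eq_single_of_mem w (mem_compl.2 hv) fun w' hw' hw'v =>
        hz w' (by rintro rfl; exact mem_compl.1 hw' hu) hw'v]
  exact hz w hwu hwv

theorem exists_ne_zero_vecMul_incidenceMatrix_eq_zero [Fintype V] [Nontrivial R]
    {T : Finset E} (hcard : T.card + 1 = Fintype.card V) (hT : ¬ Connects head tail T) :
    ∃ x : E → R, x ≠ 0 ∧ (∀ e ∉ T, x e = 0) ∧ x ᵥ* incidenceMatrix R head tail = 0 := by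
  by_contra! hcyc
  obtain ⟨C, u, hu, v, hv, hC⟩ := exists_separating_of_not_connects hT
  have huv : u ≠ v := by rintro rfl; exact hv hu
  let f : (T → R) →ₗ[R] (({u, v}ᶜ : Finset V) → R) := LinearMap.funLeft R R Subtype.val ∘ₗ
    (incidenceMatrix R head tail).vecMulLinear ∘ₗ Function.ExtendByZero.linearMap R Subtype.val
  have hf : Injective f := by
    rw [injective_iff_map_eq_zero]
    intro y hy
    set x : E → R := Function.extend Subtype.val y 0
    have hxT : ∀ e ∉ T, x e = 0 := fun e he =>
      extend_apply' _ _ _ (by rintro ⟨e', rfl⟩; exact he e'.2)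
    have hx : x = 0 := by_contra fun hx => hcyc x hx hxT <|
      vecMul_incidenceMatrix_eq_zero_of_eq_zero_off_pair hC hxT hu hv fun w hwu hwv =>
        congrFun hy ⟨w, by simp [hwu, hwv]⟩
    funext e
    simpa [x] using congrFun hx e
  have hTW := LinearMap.finrank_le_finrank_of_injective hf
  simp only [Module.finrank_fintype_fun_eq_card, Fintype.card_coe, card_compl,
    card_pair huv] at hTW
  have hV := card_le_univ ({u, v} : Finset V)
  rw [card_pair huv] at hV
  omega

end Incidence

section Minors

variable {V E n R : Type*} [Fintype V] [Fintype E] [DecidableEq V] [Fintype n] [DecidableEq n]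
  [CommRing R] {head tail : E → V} {Γ : Matrix E n R}

theorem isUnit_det_submatrix_of_connects
    (hΓ : ∀ x, x ∈ Set.range Γ.mulVec ↔ x ᵥ* incidenceMatrix R head tail = 0)
    {r : n → E} (hr : Injective r) {T : Finset E} (hrT : ∀ i, r i ∉ T)
    (hT : Connects head tail T) : IsUnit (Γ.submatrix r id).det := by
  rw [← isUnit_iff_isUnit_det, ← mulVec_surjective_iff_isUnit]
  intro y
  let x₀ : E → R := Function.extend r y 0
  obtain ⟨x₁, hx₁T, hx₁⟩ :=
    exists_vecMul_incidenceMatrix_eq hT (-(x₀ ᵥ* incidenceMatrix R head tail))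
      (by simp only [Pi.neg_apply, sum_neg_distrib, sum_vecMul_incidenceMatrix_eq_zero, neg_zero])
  obtain ⟨c, hc⟩ := (hΓ (x₀ + x₁)).2 (by rw [add_vecMul, hx₁, add_neg_cancel])
  refine ⟨c, funext fun i => ?_⟩
  change (Γ *ᵥ c) (r i) = y i
  rw [hc, Pi.add_apply, hx₁T _ (hrT i), add_zero]
  exact hr.extend_apply y 0 i

theorem det_submatrix_eq_zero_of_not_connects [IsDomain R]
    (hΓ : ∀ x, x ∈ Set.range Γ.mulVec ↔ x ᵥ* incidenceMatrix R head tail = 0)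
    {r : n → E} {T : Finset E} (hrT : ∀ i, r i ∉ T) (hcard : T.card + 1 = Fintype.card V)
    (hT : ¬ Connects head tail T) : (Γ.submatrix r id).det = 0 := by
  obtain ⟨x, hx0, hxT, hx⟩ := exists_ne_zero_vecMul_incidenceMatrix_eq_zero (R := R) hcard hT
  obtain ⟨c, rfl⟩ := (hΓ x).2 hx
  exact exists_mulVec_eq_zero_iff.1
    ⟨c, fun hc => hx0 (by rw [hc, mulVec_zero]), funext fun i => hxT _ (hrT i)⟩

end Minors

section Kirchhoff

variable {V E n : Type*} [Fintype V] [Fintype E] [DecidableEq V] [DecidableEq E] [Fintype n]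
  [DecidableEq n] {head tail : E → V} {Γ : Matrix E n ℤ}

open Classical in
theorem sq_det_submatrix_enumOfCard
    (hΓ : ∀ x, x ∈ Set.range Γ.mulVec ↔ x ᵥ* incidenceMatrix ℤ head tail = 0)
    (hcard : Fintype.card n + Fintype.card V = Fintype.card E + 1)
    (S : {S : Finset E // S.card = Fintype.card n}) :
    (Γ.submatrix (enumOfCard S) id).det ^ 2 = if Connects head tail S.1ᶜ then 1 else 0 := by
  have hrT : ∀ i, enumOfCard S i ∉ S.1ᶜ := fun i => notMem_compl.2 (enumOfCard_mem S i)
  split_ifs with hT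
  · exact Int.isUnit_sq (isUnit_det_submatrix_of_connects hΓ (enumOfCard_injective S) hrT hT)
  · have hTcard : S.1ᶜ.card + 1 = Fintype.card V := by
      have := card_add_card_compl S.1
      omega
    rw [det_submatrix_eq_zero_of_not_connects hΓ hrT hTcard hT, zero_pow two_ne_zero]

theorem det_transpose_mul_diagonal_mul_map {A : Type*} [CommRing A]
    (hΓ : ∀ x, x ∈ Set.range Γ.mulVec ↔ x ᵥ* incidenceMatrix ℤ head tail = 0)
    (hcard : Fintype.card n + Fintype.card V = Fintype.card E + 1) (f : ℤ →+* A) (w : E → A)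
    [DecidablePred (Connects head tail)] :
    ((Γ.map f)ᵀ * diagonal w * Γ.map f).det =
      ∑ T ∈ univ.filter (fun T => T.card + 1 = Fintype.card V ∧ Connects head tail T),
        ∏ e ∈ Tᶜ, w e := by
  have hsummand (S : {S : Finset E // S.card = Fintype.card n}) :
      (∏ e ∈ S.1, w e) * ((Γ.map f).submatrix (enumOfCard S) id).det ^ 2 =
        if Connects head tail S.1ᶜ then ∏ e ∈ S.1, w e else 0 := by
    rw [submatrix_map, ← RingHom.mapMatrix_apply, ← RingHom.map_det, ← map_pow,
      sq_det_submatrix_enumOfCard hΓ hcard S]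
    split_ifs <;> simp
  rw [det_transpose_mul_diagonal_mul, sum_congr rfl fun S _ => hsummand S,
    sum_subtype_card_eq_sum_filter_compl (Fintype.card n)
      (fun S => if Connects head tail Sᶜ then ∏ e ∈ S, w e else 0)]
  simp only [compl_compl]
  rw [← sum_filter, filter_filter]
  refine sum_congr (filter_congr fun T _ => and_congr_left' ?_) fun _ _ => rfl
  have := card_add_card_compl T
  omega

end Kirchhoff

open scoped Classical

theorem kirchhoff_first_symanzik_general
    {V E : Type} [Fintype V] [Fintype E] [DecidableEq V] [DecidableEq E]
    (head tail : E → V)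
    (h : ℕ) (hh : h + Fintype.card V = Fintype.card E + 1)
    (γ : Fin h → (E → ℤ))
    (hker : ∀ x : E → ℤ, x ∈ Submodule.span ℤ (Set.range γ) ↔
      ∀ v : V, (∑ e : E, x e *
        ((if head e = v then 1 else 0) - (if tail e = v then 1 else 0))) = 0) :
    Matrix.det (Matrix.of fun i j : Fin h =>
        ∑ e : E, MvPolynomial.X e * MvPolynomial.C (γ i e * γ j e)) =
    ∑ T ∈ Finset.univ.filter (fun T : Finset E =>
        T.card + 1 = Fintype.card V ∧
        ∀ u v : V,
          Relation.EqvGen (fun a b : V => ∃ e ∈ T, head e = a ∧ tail e = b) u v),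
      ∏ e ∈ Tᶜ, (MvPolynomial.X e : MvPolynomial E ℤ) := by
  let Γ : Matrix E (Fin h) ℤ := of fun e i => γ i e
  have hΓ : ∀ x, x ∈ Set.range Γ.mulVec ↔ x ᵥ* incidenceMatrix ℤ head tail = 0 := fun x => by
    have hrange := congrArg (x ∈ ·) (range_mulVecLin Γ)
    simp only [LinearMap.mem_range, mulVecLin_apply, eq_iff_iff] at hrange
    rw [Set.mem_range, hrange]
    exact (hker x).trans ⟨funext, congrFun⟩
  let C : ℤ →+* MvPolynomial E ℤ := MvPolynomial.C
  let Y : E → MvPolynomial E ℤ := MvPolynomial.X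
  have hM : (of fun i j : Fin h => ∑ e : E, MvPolynomial.X e * MvPolynomial.C (γ i e * γ j e)) =
      (Γ.map C)ᵀ * diagonal Y * Γ.map C := by
    refine Matrix.ext fun i j => ?_
    rw [of_apply, mul_apply]
    refine sum_congr rfl fun e _ => ?_
    simp only [Γ, C, Y, mul_diagonal, transpose_apply, map_apply, of_apply, map_mul]
    ring
  rw [hM, det_transpose_mul_diagonal_mul_map hΓ (by rwa [Fintype.card_fin])]
  exact sum_congr (filter_congr fun _ _ => .rfl) fun _ _ => rfl

/-- Kirchhoff's matrix-tree theorem for the first Symanzik polynomial: for a finite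
connected graph `G = (V, E, head, tail)`, the determinant of the Gram matrix
`M_{ij} = Σ_e Y_e γ_i(e) γ_j(e)` of a `ℤ`-basis `γ₁,…,γ_h` of `H₁(G,ℤ) = ker ∂ ⊆ ℤ^E`
(where `h + |V| = |E| + 1`) equals `Σ_T Π_{e ∉ T} Y_e`, the sum running over all
spanning trees `T` of `G`. -/
theorem kirchhoff_first_symanzik
    {V E : Type} [Fintype V] [Fintype E] [DecidableEq V] [DecidableEq E]
    (head tail : E → V)
    (hconn : ∀ u v : V,
      Relation.EqvGen (fun a b : V => ∃ e : E, head e = a ∧ tail e = b) u v)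
    (h : ℕ) (hh : h + Fintype.card V = Fintype.card E + 1)
    (γ : Fin h → (E → ℤ))
    (hli : LinearIndependent ℤ γ)
    (hker : ∀ x : E → ℤ, x ∈ Submodule.span ℤ (Set.range γ) ↔
      ∀ v : V, (∑ e : E, x e *
        ((if head e = v then 1 else 0) - (if tail e = v then 1 else 0))) = 0) :
    Matrix.det (Matrix.of fun i j : Fin h =>
        ∑ e : E, MvPolynomial.X e * MvPolynomial.C (γ i e * γ j e)) =
    ∑ T ∈ Finset.univ.filter (fun T : Finset E =>
        T.card + 1 = Fintype.card V ∧
        ∀ u v : V,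
          Relation.EqvGen (fun a b : V => ∃ e ∈ T, head e = a ∧ tail e = b) u v),
      ∏ e ∈ Tᶜ, (MvPolynomial.X e : MvPolynomial E ℤ) :=
  kirchhoff_first_symanzik_general head tail h hh γ hker
end

section
/- (Formula for the antilinear functional determined by its imaginary part on a period lattice) Let Ω be a complex symmetric g×g matrix whose imaginary part Im Ω is positive definite, with rows ω_1,…,ω_g, and let e_1,…,e_g be the standard basis of ℂ^g (viewed as row vectors). Then ω_1,…,ω_g, e_1,…,e_g form an ℝ-basis of ℂ^g, and if η : ℂ^g → ℝ is the unique ℝ-linear map with η(ω_k) = (μ_1)_k and η(e_j) = (μ_2)_j for given μ_1, μ_2 ∈ ℝ^g, then the ℂ-antilinear functional φ(v) = η(−iv) + i·η(v) is given by φ(v) = −v̄·(Im Ω)^{−1}·(μ_1 − Ω μ_2), where v̄ is the complex conjugate of v regarded as a row vector and μ_1 − Ω μ_2 is a column vector. -/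
/-!
Taking imaginary parts, a real relation `∑ aₖ ωₖ + ∑ bⱼ eⱼ = 0` gives `a ᵥ* Im Ω = 0`, so `a = 0`
and then `b = 0`; the `2g` vectors are therefore an `ℝ`-basis. The vector
`w = (Im Ω)⁻¹ (μ₁ - Ω μ₂)` has `Im w = -μ₂` and `Im Ω · Re w = μ₁ - Re Ω · μ₂`, which say exactly
that `u ↦ -Im (ū ⬝ᵥ w)` takes the prescribed values on this basis, so it is `η`. Since
`u ↦ ū ⬝ᵥ w` is `ℂ`-antilinear, `η (-i u) + i η u` recovers `-(ū ⬝ᵥ w)` from its imaginary part.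
-/

open Complex Matrix

section
variable {ι : Type*} [Fintype ι]

theorem Complex.im_star_dotProduct (u w : ι → ℂ) :
    (star u ⬝ᵥ w).im = (re ∘ u) ⬝ᵥ (im ∘ w) - (im ∘ u) ⬝ᵥ (re ∘ w) := by
  simp only [dotProduct, im_sum, Pi.star_apply, star_def, mul_im, conj_re, conj_im,
    Function.comp_apply, ← Finset.sum_sub_distrib]
  exact Finset.sum_congr rfl fun _ _ => by ring

def imStarDotProduct (w : ι → ℂ) : (ι → ℂ) →ₗ[ℝ] ℝ where
  toFun u := (star u ⬝ᵥ w).im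
  map_add' x y := by simp only [star_add, add_dotProduct, add_im]
  map_smul' r x := by simp [dotProduct, Finset.mul_sum, mul_assoc]

theorem imStarDotProduct_apply (w u : ι → ℂ) : imStarDotProduct w u = (star u ⬝ᵥ w).im := rfl

theorem imStarDotProduct_neg_I_smul_add_I_mul (w v : ι → ℂ) :
    (imStarDotProduct w (-I • v) : ℂ) + I * imStarDotProduct w v = star v ⬝ᵥ w := by
  apply Complex.ext <;> simp [imStarDotProduct_apply, star_smul, smul_dotProduct]

section
variable {Ω : Matrix ι ι ℂ} {μ₁ μ₂ : ι → ℝ} {w : ι → ℂ}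
  (hw : (Ω.map im).map ofReal *ᵥ w = ofReal ∘ μ₁ - Ω *ᵥ (ofReal ∘ μ₂))
include hw

theorem mulVec_re_of_mulVec_eq : Ω.map im *ᵥ (re ∘ w) = μ₁ - Ω.map re *ᵥ μ₂ := by
  ext i
  simpa [mulVec, dotProduct, re_sum] using congrArg re (congrFun hw i)

theorem im_eq_neg_of_mulVec_eq [DecidableEq ι] (hY : IsUnit (Ω.map im)) : im ∘ w = -μ₂ := by
  refine mulVec_injective_iff_isUnit.2 hY ?_
  ext i
  simpa [mulVec, dotProduct, im_sum] using congrArg im (congrFun hw i)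

theorem imStarDotProduct_row [DecidableEq ι] (hY : IsUnit (Ω.map im)) (k : ι) :
    imStarDotProduct w (Ω k) = -μ₁ k := by
  have hre : (im ∘ Ω k) ⬝ᵥ (re ∘ w) = μ₁ k - (re ∘ Ω k) ⬝ᵥ μ₂ :=
    congrFun (mulVec_re_of_mulVec_eq hw) k
  rw [imStarDotProduct_apply, im_star_dotProduct, im_eq_neg_of_mulVec_eq hw hY, dotProduct_neg,
    hre]
  ring

end

variable [DecidableEq ι]

theorem imStarDotProduct_single (w : ι → ℂ) (j : ι) :
    imStarDotProduct w (Pi.single j 1) = (w j).im := by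
  simp [imStarDotProduct_apply]

variable {Ω : Matrix ι ι ℂ}

theorem linearIndependent_rows_sum_single (hY : IsUnit (Ω.map im)) :
    LinearIndependent ℝ (Sum.elim (fun k => Ω k) fun j => (Pi.single j 1 : ι → ℂ)) := by
  rw [Fintype.linearIndependent_iff]
  intro c hc
  have hcoord : ∀ j, (∑ k, c (.inl k) • Ω k j) + (c (.inr j) : ℂ) = 0 := fun j => by
    simpa [Fintype.sum_sum_type, Finset.sum_apply, Pi.single_apply] using congrFun hc j
  have hrows : (fun k => c (.inl k)) ᵥ* Ω.map im = 0 := by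
    ext j
    simpa [vecMul, dotProduct, im_sum] using congrArg im (hcoord j)
  have hinl : ∀ k, c (.inl k) = 0 :=
    congrFun (vecMul_injective_iff_isUnit.2 hY (hrows.trans (zero_vecMul _).symm))
  rintro (k | j)
  · exact hinl k
  · exact_mod_cast by simpa [hinl] using hcoord j

theorem span_rows_sum_single_eq_top (hY : IsUnit (Ω.map im)) :
    Submodule.span ℝ (Set.range (Sum.elim (fun k => Ω k) fun j => (Pi.single j 1 : ι → ℂ))) = ⊤ :=
  (linearIndependent_rows_sum_single hY).span_eq_top_of_card_eq_finrank' <| by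
    rw [Module.finrank_pi_fintype]
    simp [Complex.finrank_real_complex, mul_two]

theorem eq_neg_imStarDotProduct {μ₁ μ₂ : ι → ℝ} {w : ι → ℂ} (hY : IsUnit (Ω.map im))
    (hw : (Ω.map im).map ofReal *ᵥ w = ofReal ∘ μ₁ - Ω *ᵥ (ofReal ∘ μ₂))
    {η : (ι → ℂ) →ₗ[ℝ] ℝ} (h₁ : ∀ k, η (Ω k) = μ₁ k) (h₂ : ∀ j, η (Pi.single j 1) = μ₂ j) :
    η = -imStarDotProduct w := by
  refine LinearMap.ext_on (span_rows_sum_single_eq_top hY) ?_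
  rintro _ ⟨k | j, rfl⟩
  · simp [h₁, imStarDotProduct_row hw hY]
  · have him : (w j).im = -μ₂ j := congrFun (im_eq_neg_of_mulVec_eq hw hY) j
    simp [h₂, imStarDotProduct_single, him]

end

theorem antilinear_functional_period_formula_general
    {g : ℕ} (Ω : Matrix (Fin g) (Fin g) ℂ)
    (hpos : (Ω.map Complex.im).PosDef)
    (μ₁ μ₂ : Fin g → ℝ) :
    (LinearIndependent ℝ
        (Sum.elim (fun k : Fin g => Ω k)
          (fun j : Fin g => (Pi.single j 1 : Fin g → ℂ))) ∧
      Submodule.span ℝ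
        (Set.range (Sum.elim (fun k : Fin g => Ω k)
          (fun j : Fin g => (Pi.single j 1 : Fin g → ℂ)))) = ⊤) ∧
    ∀ η : (Fin g → ℂ) →ₗ[ℝ] ℝ,
      (∀ k : Fin g, η (Ω k) = μ₁ k) →
      (∀ j : Fin g, η (Pi.single j 1) = μ₂ j) →
      ∀ v : Fin g → ℂ,
        ((η ((-Complex.I) • v) : ℂ) + Complex.I * (η v : ℂ)) =
        -(dotProduct (star v)
            (((Ω.map Complex.im)⁻¹.map (fun x : ℝ => (x : ℂ))).mulVec
              (fun k : Fin g =>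
                (μ₁ k : ℂ) - Ω.mulVec (fun l : Fin g => (μ₂ l : ℂ)) k))) := by
  have hY := hpos.isUnit
  refine ⟨⟨linearIndependent_rows_sum_single hY, span_rows_sum_single_eq_top hY⟩,
    fun η h₁ h₂ v => ?_⟩
  set w := ((Ω.map Complex.im)⁻¹.map (fun x : ℝ => (x : ℂ))).mulVec
    (fun k : Fin g => (μ₁ k : ℂ) - Ω.mulVec (fun l : Fin g => (μ₂ l : ℂ)) k)
  have hw : (Ω.map im).map ofReal *ᵥ w = ofReal ∘ μ₁ - Ω *ᵥ (ofReal ∘ μ₂) := by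
    have hinv : ofRealHom.mapMatrix (Ω.map im) * ofRealHom.mapMatrix (Ω.map im)⁻¹ = 1 := by
      rw [← map_mul, mul_nonsing_inv _ ((isUnit_iff_isUnit_det _).1 hY), map_one]
    rw [mulVec_mulVec]
    exact (congrArg (· *ᵥ _) hinv).trans (one_mulVec _)
  rw [eq_neg_imStarDotProduct hY hw h₁ h₂, ← imStarDotProduct_neg_I_smul_add_I_mul]
  push_cast [LinearMap.neg_apply]
  ring

/-- Formula for the antilinear functional determined by its imaginary part on a
period lattice: if `Ω` is a complex symmetric `g×g` matrix with positive definite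
imaginary part, then its rows `ω₁,…,ω_g` together with the standard basis vectors
`e₁,…,e_g` form an `ℝ`-basis of `ℂ^g`, and any `ℝ`-linear map `η : ℂ^g → ℝ` with
`η(ω_k) = (μ₁)_k` and `η(e_j) = (μ₂)_j` gives rise to the `ℂ`-antilinear functional
`φ(v) = η(−iv) + i·η(v) = −v̄·(Im Ω)⁻¹·(μ₁ − Ω μ₂)`. -/
theorem antilinear_functional_period_formula
    {g : ℕ} (Ω : Matrix (Fin g) (Fin g) ℂ)
    (hsymm : Ω.IsSymm) (hpos : (Ω.map Complex.im).PosDef)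
    (μ₁ μ₂ : Fin g → ℝ) :
    (LinearIndependent ℝ
        (Sum.elim (fun k : Fin g => Ω k)
          (fun j : Fin g => (Pi.single j 1 : Fin g → ℂ))) ∧
      Submodule.span ℝ
        (Set.range (Sum.elim (fun k : Fin g => Ω k)
          (fun j : Fin g => (Pi.single j 1 : Fin g → ℂ)))) = ⊤) ∧
    ∀ η : (Fin g → ℂ) →ₗ[ℝ] ℝ,
      (∀ k : Fin g, η (Ω k) = μ₁ k) →
      (∀ j : Fin g, η (Pi.single j 1) = μ₂ j) →
      ∀ v : Fin g → ℂ,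
        ((η ((-Complex.I) • v) : ℂ) + Complex.I * (η v : ℂ)) =
        -(dotProduct (star v)
            (((Ω.map Complex.im)⁻¹.map (fun x : ℝ => (x : ℂ))).mulVec
              (fun k : Fin g =>
                (μ₁ k : ℂ) - Ω.mulVec (fun l : Fin g => (μ₂ l : ℂ)) k))) :=
  antilinear_functional_period_formula_general Ω hpos μ₁ μ₂
end

section
/- (Invariance of the Poincaré-bundle log-norm under the symplectic group) Let Ω be a complex symmetric g×g matrix with Im Ω positive definite, W a complex row vector of length g, Z a complex column vector of length g, ρ ∈ ℂ, and let (A B; C D) ∈ Sp_{2g}(ℝ) be a real symplectic matrix in g×g blocks such that CΩ + D is invertible. Then L((AΩ+B)(CΩ+D)^{−1}, W(CΩ+D)^{−1}, ᵗ(CΩ+D)^{−1}Z, ρ − WᵗCᵗ(CΩ+D)^{−1}Z) = L(Ω, W, Z, ρ), where L(Ω,W,Z,ρ) = −2π·Im(ρ) + 2π·Im(W)·(Im Ω)^{−1}·Im(Z). -/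
/-! Write `N = CΩ + D` and `N̄ = CΩ̄ + D`. The symplectic relations give
`ᵗ(AΩ₁ + B)(CΩ₂ + D) - ᵗ(CΩ₁ + D)(AΩ₂ + B) = ᵗΩ₁ - Ω₂` for all `Ω₁, Ω₂`; hence the transformed
period matrix `Ω'` is symmetric and `Im Ω' = ᵗN⁻¹ (Im Ω) N̄⁻¹`. Writing every imaginary part as
`(x - x̄) / 2i`, the claim becomes an identity between bilinear expressions in `W, W̄, Z, Z̄`, which
follows from `N - N̄ = 2i C (Im Ω)` and the symmetry of `N⁻¹C` and `N̄⁻¹C` (from `C ᵗD = D ᵗC`). -/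

open Matrix

/-- The logarithm of the canonical invariant metric on the Poincaré bundle:
`L(Ω,W,Z,ρ) = −2π·Im(ρ) + 2π·Im(W)·(Im Ω)⁻¹·Im(Z)`. -/
noncomputable def poincareLogNorm {g : ℕ} (Ω : Matrix (Fin g) (Fin g) ℂ)
    (W Z : Fin g → ℂ) (ρ : ℂ) : ℝ :=
  -2 * Real.pi * ρ.im +
    2 * Real.pi *
      dotProduct (fun i => (W i).im)
        ((Ω.map Complex.im)⁻¹.mulVec (fun j => (Z j).im))

theorem RingHom.map_matrix_inv {n α β : Type*} [Fintype n] [DecidableEq n] [Field α] [Field β]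
    (f : α →+* β) (M : Matrix n n α) : M⁻¹.map f = (M.map f)⁻¹ := by
  have hdet : (M.map f).det = f M.det := by rw [RingHom.map_det f M, RingHom.mapMatrix_apply]
  have hadj : (M.map f).adjugate = M.adjugate.map f := by
    rw [← RingHom.mapMatrix_apply, ← RingHom.map_adjugate, RingHom.mapMatrix_apply]
  rw [Matrix.inv_def, Matrix.inv_def, hdet, hadj]
  ext i j
  simp [Ring.inverse_eq_inv', map_inv₀]

namespace SymplecticGroup

variable {n R : Type*} [Fintype n] [DecidableEq n] [CommRing R]

theorem mem_of_transpose_mul_fromBlocks_mul {M : Matrix (n ⊕ n) (n ⊕ n) R}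
    (h : Mᵀ * fromBlocks 0 1 (-1) 0 * M = fromBlocks 0 1 (-1) 0) : M ∈ symplecticGroup n R := by
  have hJ : fromBlocks 0 1 (-1) 0 = -J n R := by simp [J, fromBlocks_neg]
  rw [SymplecticGroup.mem_iff', ← neg_inj, ← hJ, ← h, hJ, Matrix.mul_neg, Matrix.neg_mul]

variable {A B C D : Matrix n n R} (hM : fromBlocks A B C D ∈ symplecticGroup n R)
include hM

theorem fromBlocks_transpose_mul_sub (Ω₁ Ω₂ : Matrix n n R) :
    (A * Ω₁ + B)ᵀ * (C * Ω₂ + D) - (C * Ω₁ + D)ᵀ * (A * Ω₂ + B) = Ω₁ᵀ - Ω₂ := by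
  obtain ⟨hAC, hBD, hAD⟩ := fromBlocks_mem_iff.1 hM
  have hDA : Dᵀ * A - Bᵀ * C = 1 := by simpa using congr(($hAD)ᵀ)
  calc _ = Ω₁ᵀ * (Aᵀ * C - Cᵀ * A) * Ω₂ + Ω₁ᵀ * (Aᵀ * D - Cᵀ * B) - (Dᵀ * A - Bᵀ * C) * Ω₂
        + (Bᵀ * D - Dᵀ * B) := by simp only [transpose_add, transpose_mul]; noncomm_ring
    _ = Ω₁ᵀ - Ω₂ := by simp [hAC, hBD, hAD, hDA]

theorem mobius_transpose_sub {Ω₁ Ω₂ : Matrix n n R} (h₁ : IsUnit (C * Ω₁ + D).det)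
    (h₂ : IsUnit (C * Ω₂ + D).det) :
    ((A * Ω₁ + B) * (C * Ω₁ + D)⁻¹)ᵀ - (A * Ω₂ + B) * (C * Ω₂ + D)⁻¹ =
      (C * Ω₁ + D)⁻¹ᵀ * (Ω₁ᵀ - Ω₂) * (C * Ω₂ + D)⁻¹ := by
  have h₁t : IsUnit (C * Ω₁ + D)ᵀ.det := by rwa [det_transpose]
  rw [← fromBlocks_transpose_mul_sub hM Ω₁ Ω₂, transpose_mul, transpose_nonsing_inv,
    Matrix.mul_sub, Matrix.sub_mul, ← Matrix.mul_assoc, mul_nonsing_inv_cancel_right _ _ h₂,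
    nonsing_inv_mul_cancel_left _ _ h₁t]

theorem mul_add_mul_transpose_comm {Ω : Matrix n n R} (hΩ : Ω.IsSymm) :
    (C * Ω + D) * Cᵀ = C * (C * Ω + D)ᵀ := by
  have hMt := transpose_mem hM
  rw [fromBlocks_transpose] at hMt
  have hCD : C * Dᵀ = D * Cᵀ := by simpa using (fromBlocks_mem_iff.1 hMt).2.1
  rw [transpose_add, transpose_mul, hΩ.eq, Matrix.add_mul, Matrix.mul_add, hCD,
    Matrix.mul_assoc]

end SymplecticGroup

namespace Matrix

variable {n R : Type*} [Fintype n] [DecidableEq n] [CommRing R]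

theorem inv_mul_eq_transpose_mul_inv_transpose {N C : Matrix n n R} (hN : IsUnit N.det)
    (hNC : N * Cᵀ = C * Nᵀ) : N⁻¹ * C = Cᵀ * N⁻¹ᵀ := by
  have hNt : IsUnit Nᵀ.det := by rwa [det_transpose]
  calc N⁻¹ * C = N⁻¹ * (C * Nᵀ) * Nᵀ⁻¹ := by
        rw [← Matrix.mul_assoc, mul_nonsing_inv_cancel_right _ _ hNt]
    _ = Cᵀ * N⁻¹ᵀ := by
        rw [← hNC, nonsing_inv_mul_cancel_left _ _ hN, transpose_nonsing_inv]

theorem transpose_mul_inv_transpose {N : Matrix n n R} (hN : IsUnit N.det) : Nᵀ * N⁻¹ᵀ = 1 := by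
  rw [← transpose_mul, nonsing_inv_mul _ hN, transpose_one]

-- With `N' = N̄`, `t = 2i`, `w' = w̄`, `z' = z̄`, this is `(2i)²` times the identity between
-- imaginary parts that the invariance amounts to.
theorem sub_vecMul_dotProduct_mulVec_sub {N N' C Y : Matrix n n R} {t : R}
    (hN : IsUnit N.det) (hN' : IsUnit N'.det) (hY : IsUnit Y.det) (hYt : Yᵀ = Y)
    (hNN' : N - N' = t • (C * Y)) (hNC : N * Cᵀ = C * Nᵀ) (hN'C : N' * Cᵀ = C * N'ᵀ)
    (w w' z z' : n → R) :
    (w ᵥ* N⁻¹ - w' ᵥ* N'⁻¹) ⬝ᵥ ((N' * Y⁻¹ * Nᵀ) *ᵥ (N⁻¹ᵀ *ᵥ z - N'⁻¹ᵀ *ᵥ z')) =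
      (w - w') ⬝ᵥ (Y⁻¹ *ᵥ (z - z')) -
        t * ((w ᵥ* (Cᵀ * N⁻¹ᵀ)) ⬝ᵥ z - (w' ᵥ* (Cᵀ * N'⁻¹ᵀ)) ⬝ᵥ z') := by
  rw [← inv_mul_eq_transpose_mul_inv_transpose hN hNC,
    ← inv_mul_eq_transpose_mul_inv_transpose hN' hN'C]
  have hNY : N⁻¹ * N' * Y⁻¹ = Y⁻¹ - t • (N⁻¹ * C) := by
    calc N⁻¹ * N' * Y⁻¹ = N⁻¹ * N * Y⁻¹ - t • (N⁻¹ * C * (Y * Y⁻¹)) := by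
          rw [show N' = N - t • (C * Y) by rw [← hNN', sub_sub_cancel]]
          simp only [Matrix.mul_sub, Matrix.sub_mul, Matrix.mul_smul, Matrix.smul_mul,
            Matrix.mul_assoc]
      _ = Y⁻¹ - t • (N⁻¹ * C) := by
          rw [nonsing_inv_mul _ hN, mul_nonsing_inv _ hY, Matrix.one_mul, Matrix.mul_one]
  have hYN : Y⁻¹ * Nᵀ * N'⁻¹ᵀ = Y⁻¹ + t • (N'⁻¹ * C) := by
    calc Y⁻¹ * Nᵀ * N'⁻¹ᵀ = Y⁻¹ * (N'ᵀ * N'⁻¹ᵀ) + t • (Y⁻¹ * Y * (Cᵀ * N'⁻¹ᵀ)) := by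
          rw [eq_add_of_sub_eq' hNN', transpose_add, transpose_smul, transpose_mul, hYt]
          simp only [Matrix.mul_add, Matrix.add_mul, Matrix.mul_smul, Matrix.smul_mul,
            Matrix.mul_assoc]
      _ = Y⁻¹ + t • (N'⁻¹ * C) := by
          rw [transpose_mul_inv_transpose hN', nonsing_inv_mul _ hY, Matrix.mul_one,
            Matrix.one_mul, inv_mul_eq_transpose_mul_inv_transpose hN' hN'C]
  have K₁₁ : N⁻¹ * (N' * Y⁻¹ * Nᵀ) * N⁻¹ᵀ = Y⁻¹ - t • (N⁻¹ * C) := by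
    calc _ = N⁻¹ * N' * Y⁻¹ * (Nᵀ * N⁻¹ᵀ) := by simp only [Matrix.mul_assoc]
      _ = _ := by rw [hNY, transpose_mul_inv_transpose hN, Matrix.mul_one]
  have K₁₂ : N⁻¹ * (N' * Y⁻¹ * Nᵀ) * N'⁻¹ᵀ = Y⁻¹ := by
    calc _ = N⁻¹ * N' * (Y⁻¹ * Nᵀ * N'⁻¹ᵀ) := by simp only [Matrix.mul_assoc]
      _ = _ := by
        rw [hYN, Matrix.mul_add, hNY, Matrix.mul_smul, Matrix.mul_assoc N⁻¹,
          mul_nonsing_inv_cancel_left _ _ hN', sub_add_cancel]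
  have K₂₁ : N'⁻¹ * (N' * Y⁻¹ * Nᵀ) * N⁻¹ᵀ = Y⁻¹ := by
    calc _ = N'⁻¹ * N' * Y⁻¹ * (Nᵀ * N⁻¹ᵀ) := by simp only [Matrix.mul_assoc]
      _ = _ := by
        rw [nonsing_inv_mul _ hN', transpose_mul_inv_transpose hN, Matrix.one_mul, Matrix.mul_one]
  have K₂₂ : N'⁻¹ * (N' * Y⁻¹ * Nᵀ) * N'⁻¹ᵀ = Y⁻¹ + t • (N'⁻¹ * C) := by
    calc _ = N'⁻¹ * N' * (Y⁻¹ * Nᵀ * N'⁻¹ᵀ) := by simp only [Matrix.mul_assoc]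
      _ = _ := by rw [nonsing_inv_mul _ hN', Matrix.one_mul, hYN]
  have hform : ∀ (G H : Matrix n n R) (u v : n → R),
      (u ᵥ* G) ⬝ᵥ ((N' * Y⁻¹ * Nᵀ) *ᵥ (H *ᵥ v)) = u ⬝ᵥ ((G * (N' * Y⁻¹ * Nᵀ) * H) *ᵥ v) := by
    intro G H u v
    rw [mulVec_mulVec, ← dotProduct_mulVec, mulVec_mulVec, Matrix.mul_assoc G]
  simp only [sub_dotProduct, mulVec_sub, dotProduct_sub, hform, K₁₁, K₁₂, K₂₁, K₂₂, sub_mulVec,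
    add_mulVec, smul_mulVec, dotProduct_add, dotProduct_smul, ← dotProduct_mulVec, smul_eq_mul]
  ring

end Matrix

section Complex

open Complex ComplexConjugate

variable {m n : Type*}

theorem Matrix.map_ofReal_map_conj (A : Matrix m n ℝ) : (A.map ofReal).map conj = A.map ofReal := by
  ext; simp

theorem Matrix.two_I_smul_map_ofReal_map_im (X : Matrix m n ℂ) :
    (2 * I) • (X.map im).map ofReal = X - X.map conj := by
  ext; simp [sub_conj]; ring

theorem Complex.two_I_smul_ofReal_im (v : n → ℂ) :
    (2 * I) • (fun i => ((v i).im : ℂ)) = v - conj ∘ v := by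
  ext; simp [sub_conj]; ring

variable [Fintype n]

theorem Complex.ofReal_im_dotProduct_mulVec_im (M : Matrix n n ℝ) (w z : n → ℂ) :
    (2 * I) ^ 2 * (((fun i => (w i).im) ⬝ᵥ (M *ᵥ fun i => (z i).im) : ℝ) : ℂ) =
      (w - conj ∘ w) ⬝ᵥ (M.map ofReal *ᵥ (z - conj ∘ z)) := by
  have hcast : (((fun i => (w i).im) ⬝ᵥ (M *ᵥ fun i => (z i).im) : ℝ) : ℂ) =
      (fun i => ((w i).im : ℂ)) ⬝ᵥ (M.map ofReal *ᵥ fun i => ((z i).im : ℂ)) := by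
    simp [dotProduct, mulVec]
  rw [hcast, ← two_I_smul_ofReal_im, ← two_I_smul_ofReal_im, mulVec_smul, smul_dotProduct,
    dotProduct_smul, smul_eq_mul, smul_eq_mul, sq, mul_assoc]

theorem Matrix.map_conj_mul_add {C D : Matrix n n ℂ} (hC : C.map conj = C) (hD : D.map conj = D)
    (Ω : Matrix n n ℂ) : (C * Ω + D).map conj = C * Ω.map conj + D := by
  rw [Matrix.map_add _ (map_add _), Matrix.map_mul, hC, hD]

variable [DecidableEq n]

theorem Matrix.map_ofReal_inv (M : Matrix n n ℝ) : M⁻¹.map ofReal = (M.map ofReal)⁻¹ :=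
  RingHom.map_matrix_inv ofRealHom M

theorem Matrix.isUnit_det_map_ofReal {M : Matrix n n ℝ} (hM : IsUnit M.det) :
    IsUnit (M.map ofReal).det := by
  rw [show M.map ofReal = ofRealHom.mapMatrix M from rfl, ← RingHom.map_det]
  exact hM.map _

theorem Matrix.isUnit_det_mul_map_conj_add {C D Ω : Matrix n n ℂ} (hC : C.map conj = C)
    (hD : D.map conj = D) (hN : IsUnit (C * Ω + D).det) :
    IsUnit (C * Ω.map conj + D).det := by
  rw [← map_conj_mul_add hC hD, ← RingHom.mapMatrix_apply, ← RingHom.map_det]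
  exact hN.map _

variable {A B C D : Matrix n n ℂ} (hM : fromBlocks A B C D ∈ symplecticGroup n ℂ)
  (hC : C.map conj = C) (hD : D.map conj = D)
include hM hC hD

theorem Matrix.map_ofReal_im_mobius (hA : A.map conj = A) (hB : B.map conj = B)
    {Ω : Matrix n n ℂ} (hΩ : Ω.IsSymm) (hN : IsUnit (C * Ω + D).det) :
    (((A * Ω + B) * (C * Ω + D)⁻¹).map im).map ofReal =
      (C * Ω + D)⁻¹ᵀ * (Ω.map im).map ofReal * (C * Ω.map conj + D)⁻¹ := by
  have hN' := isUnit_det_mul_map_conj_add hC hD hN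
  have hsymm : ((A * Ω + B) * (C * Ω + D)⁻¹)ᵀ = (A * Ω + B) * (C * Ω + D)⁻¹ := by
    rw [← sub_eq_zero, SymplecticGroup.mobius_transpose_sub hM hN hN, hΩ.eq, sub_self,
      Matrix.mul_zero, Matrix.zero_mul]
  have hconj : ((A * Ω + B) * (C * Ω + D)⁻¹).map conj =
      (A * Ω.map conj + B) * (C * Ω.map conj + D)⁻¹ := by
    rw [Matrix.map_mul, RingHom.map_matrix_inv, map_conj_mul_add hA hB, map_conj_mul_add hC hD]
  refine smul_right_injective _ (mul_ne_zero two_ne_zero I_ne_zero) ?_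
  dsimp only
  rw [two_I_smul_map_ofReal_map_im, hconj, ← hsymm, SymplecticGroup.mobius_transpose_sub hM hN hN',
    hΩ.eq, ← two_I_smul_map_ofReal_map_im, Matrix.mul_smul, Matrix.smul_mul]

theorem Matrix.im_dotProduct_mulVec_im_mobius (hA : A.map conj = A) (hB : B.map conj = B)
    {Ω : Matrix n n ℂ} (hΩ : Ω.IsSymm) (hY : IsUnit (Ω.map im).det) (hN : IsUnit (C * Ω + D).det)
    (W Z : n → ℂ) :
    (fun i => ((W ᵥ* (C * Ω + D)⁻¹) i).im) ⬝ᵥ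
        ((((A * Ω + B) * (C * Ω + D)⁻¹).map im)⁻¹ *ᵥ fun i => (((C * Ω + D)⁻¹ᵀ *ᵥ Z) i).im) =
      (fun i => (W i).im) ⬝ᵥ ((Ω.map im)⁻¹ *ᵥ fun i => (Z i).im) -
        ((W ᵥ* (Cᵀ * (C * Ω + D)⁻¹ᵀ)) ⬝ᵥ Z).im := by
  have hN' := isUnit_det_mul_map_conj_add hC hD hN
  have hY' := isUnit_det_map_ofReal hY
  have hIm := map_ofReal_im_mobius hM hC hD hA hB hΩ hN
  set N := C * Ω + D
  set N' := C * Ω.map conj + D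
  have hNtinv : N⁻¹ᵀ⁻¹ = Nᵀ := by
    rw [transpose_nonsing_inv, nonsing_inv_nonsing_inv _ (by rwa [det_transpose])]
  have hNinv : N⁻¹.map conj = N'⁻¹ := by rw [RingHom.map_matrix_inv, map_conj_mul_add hC hD]
  have hvecMul : ∀ M : Matrix n n ℂ, conj ∘ (W ᵥ* M) = (conj ∘ W) ᵥ* M.map conj := fun M =>
    funext fun i => RingHom.map_vecMul _ M W i
  have hZ : conj ∘ (N⁻¹ᵀ *ᵥ Z) = N'⁻¹ᵀ *ᵥ (conj ∘ Z) := by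
    rw [← hNinv, ← transpose_map]; exact funext fun i => RingHom.map_mulVec _ _ Z i
  have hρ : (2 * I) ^ 2 * (((W ᵥ* (Cᵀ * N⁻¹ᵀ)) ⬝ᵥ Z).im : ℂ) =
      2 * I * ((W ᵥ* (Cᵀ * N⁻¹ᵀ)) ⬝ᵥ Z - ((conj ∘ W) ᵥ* (Cᵀ * N'⁻¹ᵀ)) ⬝ᵥ (conj ∘ Z)) := by
    have hconj : conj ((W ᵥ* (Cᵀ * N⁻¹ᵀ)) ⬝ᵥ Z) = ((conj ∘ W) ᵥ* (Cᵀ * N'⁻¹ᵀ)) ⬝ᵥ (conj ∘ Z) := by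
      rw [RingHom.map_dotProduct, hvecMul, Matrix.map_mul, transpose_map, transpose_map, hC,
        hNinv]
    rw [← hconj, sub_conj]; push_cast; ring
  have hNN' : N - N' = (2 * I) • (C * (Ω.map im).map ofReal) := by
    rw [add_sub_add_right_eq_sub, ← Matrix.mul_sub, ← two_I_smul_map_ofReal_map_im,
      Matrix.mul_smul]
  apply ofReal_injective
  apply mul_left_cancel₀ (pow_ne_zero 2 (mul_ne_zero two_ne_zero I_ne_zero))
  rw [ofReal_sub, mul_sub, ofReal_im_dotProduct_mulVec_im, ofReal_im_dotProduct_mulVec_im,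
    map_ofReal_inv, map_ofReal_inv, hIm, Matrix.mul_inv_rev, Matrix.mul_inv_rev,
    nonsing_inv_nonsing_inv _ hN', hNtinv, ← Matrix.mul_assoc, hvecMul, hNinv, hZ, hρ]
  exact sub_vecMul_dotProduct_mulVec_sub hN hN' hY'
    (by rw [← transpose_map, ← transpose_map, hΩ.eq]) hNN'
    (SymplecticGroup.mul_add_mul_transpose_comm hM hΩ)
    (SymplecticGroup.mul_add_mul_transpose_comm hM (hΩ.map _)) _ _ _ _

end Complex

/-- Invariance of the Poincaré-bundle log-norm under the symplectic group: for a real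
symplectic block matrix `(A B; C D) ∈ Sp_{2g}(ℝ)` with `CΩ + D` invertible,
`L((AΩ+B)(CΩ+D)⁻¹, W(CΩ+D)⁻¹, ᵗ(CΩ+D)⁻¹Z, ρ − WᵗCᵗ(CΩ+D)⁻¹Z) = L(Ω, W, Z, ρ)`. -/
theorem poincareLogNorm_symplectic_invariance
    {g : ℕ} (Ω : Matrix (Fin g) (Fin g) ℂ)
    (hsymm : Ω.IsSymm) (hpos : (Ω.map Complex.im).PosDef)
    (W Z : Fin g → ℂ) (ρ : ℂ)
    (A B C D : Matrix (Fin g) (Fin g) ℝ)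
    (hsymp : (Matrix.fromBlocks A B C D)ᵀ *
        Matrix.fromBlocks 0 1 (-1) 0 * Matrix.fromBlocks A B C D =
      Matrix.fromBlocks 0 1 (-1) 0)
    (hinv : IsUnit (C.map (fun x : ℝ => (x : ℂ)) * Ω + D.map (fun x : ℝ => (x : ℂ))).det) :
    poincareLogNorm
      ((A.map (fun x : ℝ => (x : ℂ)) * Ω + B.map (fun x : ℝ => (x : ℂ))) *
        (C.map (fun x : ℝ => (x : ℂ)) * Ω + D.map (fun x : ℝ => (x : ℂ)))⁻¹)
      (Matrix.vecMul W
        (C.map (fun x : ℝ => (x : ℂ)) * Ω + D.map (fun x : ℝ => (x : ℂ)))⁻¹)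
      (((C.map (fun x : ℝ => (x : ℂ)) * Ω + D.map (fun x : ℝ => (x : ℂ)))⁻¹)ᵀ.mulVec Z)
      (ρ - dotProduct
        (Matrix.vecMul W
          ((C.map (fun x : ℝ => (x : ℂ)))ᵀ *
            ((C.map (fun x : ℝ => (x : ℂ)) * Ω + D.map (fun x : ℝ => (x : ℂ)))⁻¹)ᵀ)) Z) =
    poincareLogNorm Ω W Z ρ := by
  have hM : fromBlocks A B C D ∈ symplecticGroup (Fin g) ℝ :=
    SymplecticGroup.mem_of_transpose_mul_fromBlocks_mul hsymp
  have hMc : fromBlocks (A.map (fun x : ℝ => (x : ℂ))) (B.map (fun x : ℝ => (x : ℂ)))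
      (C.map (fun x : ℝ => (x : ℂ))) (D.map (fun x : ℝ => (x : ℂ))) ∈
        symplecticGroup (Fin g) ℂ := by
    rw [← fromBlocks_map]; exact SymplecticGroup.map_mem hM Complex.ofRealHom
  have key := im_dotProduct_mulVec_im_mobius hMc (map_ofReal_map_conj C) (map_ofReal_map_conj D)
    (map_ofReal_map_conj A) (map_ofReal_map_conj B) hsymm
    ((isUnit_iff_isUnit_det _).1 hpos.isUnit) hinv W Z
  simp only [poincareLogNorm, key, Complex.sub_im]
  ring
end
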